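/- arXiv:1705.00266 — 3 statements merged into one kernel-verified Lean document; each statement's English description precedes it below -/
import Mathlib

section
/- For Puiseux series x, y over a commutative ring L, ELTrop(x) + ELTrop(y) ⊨ ELTrop(x+y) and ELTrop(x)·ELTrop(y) ⊨ ELTrop(xy). If moreover L is an integral domain, then ELTrop(xy) = ELTrop(x)·ELTrop(y). -/
/-- ELT addition on pairs (tangible value, layer). -/
def eltAdd {F L : Type*} [LinearOrder F] [Add L] (x y : F × L) : F × L :=
  if y.1 < x.1 then x else if x.1 < y.1 then y else (x.1, x.2 + y.2)

/-- ELT multiplication on pairs (tangible value, layer). -/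
def eltMul {F L : Type*} [Add F] [Mul L] (x y : F × L) : F × L :=
  (x.1 + y.1, x.2 * y.2)

/-- Addition on R̄ = R ∪ {−∞}, with −∞ (i.e. `none`) the additive identity. -/
def eAdd {F L : Type*} [LinearOrder F] [Add L] :
    Option (F × L) → Option (F × L) → Option (F × L)
  | none, y => y
  | some a, none => some a
  | some a, some b => some (eltAdd a b)

/-- Multiplication on R̄ = R ∪ {−∞}, with −∞ absorbing. -/
def eMul {F L : Type*} [Add F] [Mul L] :
    Option (F × L) → Option (F × L) → Option (F × L)
  | some a, some b => some (eltMul a b)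
  | _, _ => none

/-- The layer (sorting map) on R̄; the layer of −∞ is 0. -/
def sBar {F L : Type*} [Zero L] (x : Option (F × L)) : L :=
  (x.map Prod.snd).getD 0

/-- The surpassing relation on R̄ : x ⊨ y iff x = y + z with z of layer zero. -/
def eSurp {F L : Type*} [LinearOrder F] [Add L] [Zero L]
    (x y : Option (F × L)) : Prop :=
  ∃ z : Option (F × L), sBar z = 0 ∧ x = eAdd y z

open Classical in
/-- EL tropicalization of a Puiseux (Hahn) series: a nonzero series with leading
monomial ℓ t^a goes to (−a, ℓ); the zero series goes to −∞. -/
noncomputable def ELTrop {F L : Type*} [AddCommGroup F] [LinearOrder F] [IsOrderedAddMonoid F] [CommRing L]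
    (x : HahnSeries F L) : Option (F × L) :=
  if x = 0 then none else some (-x.order, x.coeff x.order)

/-!
Both tropicalized operations return the coefficient of `x + y`, resp. `x * y`, at the
natural lower bound for its order: `min (ord x) (ord y)`, resp. `ord x + ord y`. Such a
coefficient always surpasses the tropicalization: either the bound is attained, or the
coefficient vanishes, and an element of layer zero absorbs everything of smaller tangible
value. Over a domain, `ord (x * y) = ord x + ord y`, which gives equality.
-/

section Layered

variable {F L : Type*} [LinearOrder F] [Add L]

@[simp]
lemma eAdd_none_right (u : Option (F × L)) : eAdd u none = u := by
  cases u <;> rfl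

variable [Zero L]

lemma eSurp_refl (u : Option (F × L)) : eSurp u u :=
  ⟨none, rfl, (eAdd_none_right u).symm⟩

lemma eSurp_some_zero_of_forall_lt {a : F} {w : Option (F × L)} (hw : ∀ p ∈ w, p.1 < a) :
    eSurp (some (a, 0)) w := by
  refine ⟨some (a, 0), rfl, ?_⟩
  cases w with
  | none => rfl
  | some p => simp [eAdd, eltAdd, hw p rfl, (hw p rfl).not_gt]

end Layered

@[simp]
lemma eMul_none_right {F L : Type*} [Add F] [Mul L] (u : Option (F × L)) :
    eMul u none = none := by
  cases u <;> rfl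

section Tropicalization

open HahnSeries

variable {F L : Type*} [AddCommGroup F] [LinearOrder F] [IsOrderedAddMonoid F] [CommRing L]

@[simp]
lemma ELTrop_zero : ELTrop (0 : HahnSeries F L) = none := if_pos rfl

lemma ELTrop_of_ne_zero {x : HahnSeries F L} (hx : x ≠ 0) :
    ELTrop x = some (-x.order, x.coeff x.order) := if_neg hx

lemma ELTrop_of_orderTop_eq {x : HahnSeries F L} {c : F} (h : x.orderTop = c) :
    ELTrop x = some (-c, x.coeff c) := by
  have hx : x ≠ 0 := orderTop_ne_top.mp (h ▸ WithTop.coe_ne_top)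
  have hc : x.order = c := WithTop.coe_injective ((order_eq_orderTop_of_ne_zero hx).trans h)
  rw [ELTrop_of_ne_zero hx, hc]

lemma eSurp_ELTrop_of_le_orderTop {x : HahnSeries F L} {c : F}
    (hc : (c : WithTop F) ≤ x.orderTop) :
    eSurp (some (-c, x.coeff c)) (ELTrop x) := by
  by_cases hxc : x.coeff c = 0
  · rw [hxc]
    refine eSurp_some_zero_of_forall_lt fun p hp => ?_
    rcases eq_or_ne x 0 with rfl | hx
    · simp at hp
    rw [ELTrop_of_ne_zero hx, Option.mem_some_iff] at hp
    subst hp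
    have hlt : (c : WithTop F) < x.orderTop :=
      hc.lt_of_ne (orderTop_ne_of_coeff_eq_zero hxc).symm
    rw [← order_eq_orderTop_of_ne_zero hx, WithTop.coe_lt_coe] at hlt
    exact neg_lt_neg hlt
  · rw [ELTrop_of_orderTop_eq (le_antisymm (orderTop_le_of_coeff_ne_zero hxc) hc)]
    exact eSurp_refl _

lemma eAdd_ELTrop {x y : HahnSeries F L} (hx : x ≠ 0) (hy : y ≠ 0) :
    eAdd (ELTrop x) (ELTrop y) =
      some (-min x.order y.order, (x + y).coeff (min x.order y.order)) := by
  rw [ELTrop_of_ne_zero hx, ELTrop_of_ne_zero hy]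
  simp only [eAdd, eltAdd, neg_lt_neg_iff, coeff_add, Option.some.injEq]
  rcases lt_trichotomy x.order y.order with h | h | h
  · simp [h, h.le, coeff_eq_zero_of_lt_order h]
  · simp [h]
  · simp [h, h.le, coeff_eq_zero_of_lt_order h]

lemma eMul_ELTrop {x y : HahnSeries F L} (hx : x ≠ 0) (hy : y ≠ 0) :
    eMul (ELTrop x) (ELTrop y) =
      some (-(x.order + y.order), (x * y).coeff (x.order + y.order)) := by
  rw [ELTrop_of_ne_zero hx, ELTrop_of_ne_zero hy, coeff_mul_order_add_order, leadingCoeff_eq,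
    leadingCoeff_eq, neg_add]
  rfl

end Tropicalization

theorem ELTrop_props {F L : Type*} [AddCommGroup F] [LinearOrder F] [IsOrderedAddMonoid F] [CommRing L]
    (x y : HahnSeries F L) :
    eSurp (eAdd (ELTrop x) (ELTrop y)) (ELTrop (x + y)) ∧
    eSurp (eMul (ELTrop x) (ELTrop y)) (ELTrop (x * y)) ∧
    (IsDomain L → ELTrop (x * y) = eMul (ELTrop x) (ELTrop y)) := by
  rcases eq_or_ne x 0 with rfl | hx
  · simp [eAdd, eMul, eSurp_refl]
  rcases eq_or_ne y 0 with rfl | hy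
  · simp [eSurp_refl]
  have hox := HahnSeries.order_eq_orderTop_of_ne_zero hx
  have hoy := HahnSeries.order_eq_orderTop_of_ne_zero hy
  have hxy : x.orderTop + y.orderTop = ↑(x.order + y.order) := by
    rw [← hox, ← hoy, WithTop.coe_add]
  refine ⟨?_, ?_, fun _ => ?_⟩
  · rw [eAdd_ELTrop hx hy]
    refine eSurp_ELTrop_of_le_orderTop ?_
    rw [WithTop.coe_min, hox, hoy]
    exact HahnSeries.min_orderTop_le_orderTop_add
  · rw [eMul_ELTrop hx hy]
    exact eSurp_ELTrop_of_le_orderTop (hxy ▸ HahnSeries.orderTop_add_le_mul)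
  · rw [eMul_ELTrop hx hy]
    exact ELTrop_of_orderTop_eq ((HahnSeries.orderTop_mul x y).trans hxy)
end

section
/- Transfer principle for ELT rings (surpassing form): let P, Q be polynomial expressions (formal differences of positive polynomial expressions) in variables λ₁,…,λ_m. If the identity P = Q holds in all commutative rings and the identity P ≥ Q holds in all commutative tropical (max-plus) algebras, then P(r₁,…,r_m) ⊨ Q(r₁,…,r_m) for all r₁,…,r_m in any commutative ELT ring R. -/
/-- The negation map on R̄, (a, ℓ) ↦ (a, −ℓ). -/
def eNeg {F L : Type*} [Neg L] (x : Option (F × L)) : Option (F × L) :=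
  x.map (fun w => (w.1, -w.2))

/-- Positive polynomial expressions in m variables, built from 0, 1, variables,
addition and multiplication. -/
inductive PPE (m : ℕ) : Type
  | zero : PPE m
  | one : PPE m
  | var : Fin m → PPE m
  | add : PPE m → PPE m → PPE m
  | mul : PPE m → PPE m → PPE m

/-- Evaluation of a positive polynomial expression in a commutative (semi)ring. -/
def PPE.evalS {m : ℕ} {S : Type*} [CommSemiring S] : PPE m → (Fin m → S) → S
  | .zero, _ => 0
  | .one, _ => 1
  | .var i, v => v i
  | .add p q, v => p.evalS v + q.evalS v
  | .mul p q, v => p.evalS v * q.evalS v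

/-- Evaluation of a positive polynomial expression in the tropical (max-plus)
algebra over an ordered abelian group G, with −∞ adjoined. -/
def PPE.evalTrop {m : ℕ} {G : Type*} [AddCommGroup G] [LinearOrder G] [IsOrderedAddMonoid G] :
    PPE m → (Fin m → WithBot G) → WithBot G
  | .zero, _ => ⊥
  | .one, _ => ((0 : G) : WithBot G)
  | .var i, v => v i
  | .add p q, v => max (p.evalTrop v) (q.evalTrop v)
  | .mul p q, v => p.evalTrop v + q.evalTrop v

/-- Evaluation of a positive polynomial expression in an ELT ring (with −∞). -/
def PPE.evalELT {m : ℕ} {F L : Type*} [AddCommGroup F] [LinearOrder F] [IsOrderedAddMonoid F] [CommRing L] :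
    PPE m → (Fin m → Option (F × L)) → Option (F × L)
  | .zero, _ => none
  | .one, _ => some ((0 : F), (1 : L))
  | .var i, v => v i
  | .add p q, v => eAdd (p.evalELT v) (q.evalELT v)
  | .mul p q, v => eMul (p.evalELT v) (q.evalELT v)

section EltPair

variable {F L : Type*} [LinearOrder F]

lemma eltAdd_of_lt [Add L] {a b : F × L} (h : b.1 < a.1) : eltAdd a b = a := if_pos h

lemma eltAdd_of_gt [Add L] {a b : F × L} (h : a.1 < b.1) : eltAdd a b = b := by
  rw [eltAdd, if_neg h.not_gt, if_pos h]

lemma eltAdd_of_eq [Add L] {a b : F × L} (h : a.1 = b.1) : eltAdd a b = (a.1, a.2 + b.2) := by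
  rw [eltAdd, if_neg h.symm.not_lt, if_neg h.not_lt]

lemma eltAdd_fst [Add L] (a b : F × L) : (eltAdd a b).1 = max a.1 b.1 := by
  rcases lt_trichotomy a.1 b.1 with h | h | h
  · rw [eltAdd_of_gt h, max_eq_right h.le]
  · rw [eltAdd_of_eq h, ← h, max_self]
  · rw [eltAdd_of_lt h, max_eq_left h.le]

lemma eltAdd_comm [AddCommMagma L] (a b : F × L) : eltAdd a b = eltAdd b a := by
  rcases lt_trichotomy a.1 b.1 with h | h | h
  · rw [eltAdd_of_gt h, eltAdd_of_lt h]
  · rw [eltAdd_of_eq h, eltAdd_of_eq h.symm, h, add_comm]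
  · rw [eltAdd_of_lt h, eltAdd_of_gt h]

lemma eltAdd_assoc [AddSemigroup L] (a b c : F × L) :
    eltAdd (eltAdd a b) c = eltAdd a (eltAdd b c) := by
  unfold eltAdd
  split_ifs <;> first | (exfalso; order) | simp_all [add_assoc]

lemma eltMul_eltAdd [Add F] [AddLeftStrictMono F] [Distrib L] (a b c : F × L) :
    eltMul a (eltAdd b c) = eltAdd (eltMul a b) (eltMul a c) := by
  rcases lt_trichotomy b.1 c.1 with h | h | h
  · rw [eltAdd_of_gt h, eltAdd_of_gt (add_lt_add_right h a.1)]
  · rw [eltAdd_of_eq h, eltAdd_of_eq (congrArg (a.1 + ·) h), eltMul, eltMul, eltMul, mul_add]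
  · rw [eltAdd_of_lt h, eltAdd_of_lt (add_lt_add_right h a.1)]

end EltPair

section EltBar

variable {F L : Type*}

instance : Zero (Option (F × L)) := ⟨none⟩

instance [Zero F] [One L] : One (Option (F × L)) := ⟨some (0, 1)⟩

instance [Add F] [Mul L] : Mul (Option (F × L)) := ⟨eMul⟩

lemma eMul_comm [AddCommMagma F] [CommMagma L] (x y : Option (F × L)) : eMul x y = eMul y x := by
  cases x <;> cases y <;> simp [eMul, eltMul, add_comm, mul_comm]

lemma eMul_assoc [AddSemigroup F] [Semigroup L] (x y z : Option (F × L)) :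
    eMul (eMul x y) z = eMul x (eMul y z) := by
  cases x <;> cases y <;> cases z <;> simp [eMul, eltMul, add_assoc, mul_assoc]

lemma eMul_one [AddZeroClass F] [MulOneClass L] (x : Option (F × L)) :
    eMul x (some (0, 1)) = x := by
  cases x <;> simp [eMul, eltMul]

/-- The tangible value `R̄ → F ∪ {−∞}`, the counterpart of the layer `sBar`. -/
def tBar (x : Option (F × L)) : WithBot F := x.map Prod.fst

@[simp] lemma tBar_none : tBar (none : Option (F × L)) = ⊥ := rfl

@[simp] lemma tBar_some (a : F × L) : tBar (some a) = (a.1 : WithBot F) := rfl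

@[simp] lemma tBar_eNeg [Neg L] (x : Option (F × L)) : tBar (eNeg x) = tBar x := by
  cases x <;> rfl

lemma tBar_mul [Add F] [Mul L] (x y : Option (F × L)) : tBar (x * y) = tBar x + tBar y := by
  change tBar (eMul x y) = _
  cases x <;> cases y <;> simp [eMul, eltMul]

lemma eNeg_eNeg [InvolutiveNeg L] (x : Option (F × L)) : eNeg (eNeg x) = x := by
  cases x <;> simp [eNeg]

variable [LinearOrder F]

instance [Add L] : Add (Option (F × L)) := ⟨eAdd⟩

lemma eAdd_none [Add L] (x : Option (F × L)) : eAdd x none = x := by cases x <;> rfl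

lemma eAdd_comm [AddCommMagma L] (x y : Option (F × L)) : eAdd x y = eAdd y x := by
  cases x <;> cases y <;> simp [eAdd, eltAdd_comm]

lemma eAdd_assoc [AddSemigroup L] (x y z : Option (F × L)) :
    eAdd (eAdd x y) z = eAdd x (eAdd y z) := by
  cases x <;> cases y <;> cases z <;> simp [eAdd, eltAdd_assoc]

instance [AddCommSemigroup L] : AddCommMonoid (Option (F × L)) where
  add_assoc := eAdd_assoc
  zero_add _ := rfl
  add_zero := eAdd_none
  add_comm := eAdd_comm
  nsmul := nsmulRec

lemma eMul_eAdd [Add F] [AddLeftStrictMono F] [Distrib L] (x y z : Option (F × L)) :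
    eMul x (eAdd y z) = eAdd (eMul x y) (eMul x z) := by
  cases x <;> cases y <;> cases z <;> simp [eAdd, eMul, eltMul_eltAdd]

instance [AddCommMonoid F] [AddLeftStrictMono F] [CommSemiring L] :
    CommSemiring (Option (F × L)) where
  left_distrib := eMul_eAdd
  right_distrib x y z := by
    change eMul (eAdd x y) z = eAdd (eMul x z) (eMul y z)
    rw [eMul_comm, eMul_eAdd, eMul_comm z, eMul_comm z]
  zero_mul _ := rfl
  mul_zero x := by cases x <;> rfl
  mul_assoc := eMul_assoc
  one_mul x := (eMul_comm _ x).trans (eMul_one x)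
  mul_one := eMul_one
  mul_comm := eMul_comm

lemma tBar_add [Add L] (x y : Option (F × L)) : tBar (x + y) = max (tBar x) (tBar y) := by
  change tBar (eAdd x y) = _
  cases x <;> cases y <;> simp [eAdd, eltAdd_fst]

variable [AddCommGroup L]

lemma eNeg_add (x y : Option (F × L)) : eNeg (x + y) = eNeg x + eNeg y := by
  rcases x with _ | a; · rfl
  rcases y with _ | b; · rfl
  change some _ = some (eltAdd (a.1, -a.2) (b.1, -b.2))
  rcases lt_trichotomy a.1 b.1 with h | h | h
  · rw [eltAdd_of_gt h, eltAdd_of_gt (a := (a.1, -a.2)) (b := (b.1, -b.2)) h]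
  · rw [eltAdd_of_eq h, eltAdd_of_eq (a := (a.1, -a.2)) (b := (b.1, -b.2)) h]
    simp [add_comm]
  · rw [eltAdd_of_lt h, eltAdd_of_lt (a := (a.1, -a.2)) (b := (b.1, -b.2)) h]

lemma add_eNeg_self (x : Option (F × L)) : x + eNeg x = x.map fun a => (a.1, 0) := by
  cases x with
  | none => rfl
  | some a => exact congrArg some ((eltAdd_of_eq (a := a) (b := (a.1, -a.2)) rfl).trans (by simp))

lemma sBar_add_eNeg_self (x : Option (F × L)) : sBar (x + eNeg x) = 0 := by
  rw [add_eNeg_self]; cases x <;> rfl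

lemma add_add_eNeg_self_of_tBar_le {x y : Option (F × L)} (h : tBar y ≤ tBar x) :
    x + (y + eNeg y) = x := by
  rw [add_eNeg_self]
  rcases y with _ | b
  · exact add_zero x
  rcases x with _ | a
  · simp at h
  change some (eltAdd a (b.1, 0)) = some a
  rcases (WithBot.coe_le_coe.1 h).lt_or_eq with hlt | heq
  · rw [eltAdd_of_lt (a := a) (b := (b.1, 0)) hlt]
  · rw [eltAdd_of_eq (a := a) (b := (b.1, 0)) heq.symm, add_zero]

lemma eSurp_of_tBar_le_of_sBar_eq_zero {x y : Option (F × L)} (h : tBar y ≤ tBar x)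
    (hxy : sBar (x + eNeg y) = 0) : eSurp x y :=
  ⟨x + eNeg y, hxy, by
    change x = y + (x + eNeg y)
    rw [add_left_comm, add_add_eNeg_self_of_tBar_le h]⟩

lemma eSurp_add_eNeg_of_add_eq {A B C D : Option (F × L)} (hsum : A + D = C + B)
    (hval : max (tBar C) (tBar D) ≤ max (tBar A) (tBar B)) :
    eSurp (A + eNeg B) (C + eNeg D) := by
  refine eSurp_of_tBar_le_of_sBar_eq_zero (by simpa only [tBar_add, tBar_eNeg] using hval) ?_
  have : A + eNeg B + eNeg (C + eNeg D) = A + D + eNeg (C + B) := by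
    rw [eNeg_add, eNeg_add, eNeg_eNeg]; abel
  rw [this, hsum]
  exact sBar_add_eNeg_self _

end EltBar

namespace PPE

variable {m : ℕ}

lemma evalELT_eq_evalS {F L : Type*} [AddCommGroup F] [LinearOrder F] [IsOrderedAddMonoid F]
    [CommRing L] (p : PPE m) (v : Fin m → Option (F × L)) : p.evalELT v = p.evalS v := by
  induction p with
  | zero | one | var => rfl
  | add p q hp hq | mul p q hp hq => rw [evalELT, evalS, hp, hq]; rfl

lemma tBar_evalELT {F L : Type*} [AddCommGroup F] [LinearOrder F] [IsOrderedAddMonoid F]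
    [CommRing L] (p : PPE m) (v : Fin m → Option (F × L)) :
    tBar (p.evalELT v) = p.evalTrop (tBar ∘ v) := by
  induction p with
  | zero | one | var => rfl
  | add p q hp hq => rw [evalELT, evalTrop, ← hp, ← hq]; exact tBar_add _ _
  | mul p q hp hq => rw [evalELT, evalTrop, ← hp, ← hq]; exact tBar_mul _ _

lemma map_evalS {S T : Type*} [CommSemiring S] [CommSemiring T] (f : S →+* T) (p : PPE m)
    (v : Fin m → S) : f (p.evalS v) = p.evalS (f ∘ v) := by
  induction p with
  | zero => exact map_zero f
  | one => exact map_one f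
  | var => rfl
  | add p q hp hq => rw [evalS, evalS, map_add, hp, hq]
  | mul p q hp hq => rw [evalS, evalS, map_mul, hp, hq]

lemma evalS_eq_of_forall_commRing (p q : PPE m)
    (h : ∀ (S : Type) [CommRing S] (v : Fin m → S), p.evalS v = q.evalS v)
    {S : Type*} [CommSemiring S] (v : Fin m → S) : p.evalS v = q.evalS v := by
  have hℕ : p.evalS (MvPolynomial.X : Fin m → MvPolynomial (Fin m) ℕ) =
      q.evalS MvPolynomial.X := by
    apply MvPolynomial.map_injective (Nat.castRingHom ℤ) Nat.cast_injective
    simp only [map_evalS, Function.comp_def, MvPolynomial.map_X]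
    exact h _ _
  simpa only [map_evalS, Function.comp_def, MvPolynomial.coe_eval₂Hom, MvPolynomial.eval₂_X]
    using congrArg (MvPolynomial.eval₂Hom (Nat.castRingHom S) v) hℕ

lemma map_evalTrop {A B : Type*} [AddCommGroup A] [LinearOrder A] [IsOrderedAddMonoid A]
    [AddCommGroup B] [LinearOrder B] [IsOrderedAddMonoid B] (g : A →+o B) (p : PPE m)
    (w : Fin m → WithBot A) : WithBot.map g (p.evalTrop w) = p.evalTrop (WithBot.map g ∘ w) := by
  induction p with
  | zero | var => rfl
  | one => exact congrArg _ (map_zero g)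
  | add p q hp hq =>
    rw [evalTrop, evalTrop, (WithBot.monotone_map_iff.2 (OrderHomClass.mono g)).map_max, hp, hq]
  | mul p q hp hq => rw [evalTrop, evalTrop, WithBot.map_add, hp, hq]

end PPE

lemma exists_orderAddMonoidHom_range_superset {F : Type*} [AddCommGroup F] [LinearOrder F]
    [IsOrderedAddMonoid F] {ι : Type} [Finite ι] (a : ι → F) :
    ∃ (G : Type) (_ : AddCommGroup G) (_ : LinearOrder G) (_ : IsOrderedAddMonoid G)
      (g : G →+o F), Set.range a ⊆ Set.range g := by
  classical
  cases nonempty_fintype ι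
  let ψ : (ι → ℤ) →+ F := (Fintype.linearCombination ℤ a).toAddMonoidHom
  let H := ψ.range
  have : Small.{0} H := small_of_surjective ψ.rangeRestrict_surjective
  let e : Shrink.{0} H ≃+ H := Shrink.addEquiv
  have : IsOrderedAddMonoid (Shrink.{0} H) :=
    Function.Injective.isOrderedAddMonoid e (map_add e) Iff.rfl
  refine ⟨Shrink.{0} H, inferInstance, inferInstance, this,
    ⟨H.subtype.comp e.toAddMonoidHom, fun x y hxy => hxy⟩, ?_⟩
  rintro _ ⟨i, rfl⟩
  exact ⟨e.symm ⟨a i, Pi.single i 1, by simp [ψ]⟩, by simp⟩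

lemma PPE.evalTrop_le_of_forall_type {m : ℕ} (p q : PPE m)
    (h : ∀ (G : Type) [AddCommGroup G] [LinearOrder G] [IsOrderedAddMonoid G]
      (v : Fin m → WithBot G), q.evalTrop v ≤ p.evalTrop v)
    {F : Type*} [AddCommGroup F] [LinearOrder F] [IsOrderedAddMonoid F] (w : Fin m → WithBot F) :
    q.evalTrop w ≤ p.evalTrop w := by
  obtain ⟨G, _, _, _, g, hg⟩ := exists_orderAddMonoidHom_range_superset fun i => (w i).unbotD 0
  have hw : ∀ i, ∃ y : WithBot G, WithBot.map g y = w i := by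
    intro i
    cases hwi : w i with
    | bot => exact ⟨⊥, rfl⟩
    | coe x =>
      obtain ⟨y, hy⟩ := hg ⟨i, rfl⟩
      exact ⟨y, by simp [hy, hwi]⟩
  choose v hv using hw
  rw [← funext hv, ← Function.comp_def, ← PPE.map_evalTrop, ← PPE.map_evalTrop]
  exact WithBot.monotone_map_iff.2 (OrderHomClass.mono g) (h G v)

/-- ELT transfer principle, surpassing form.  A polynomial expression is a formal
difference `(P⁺, P⁻)` of positive polynomial expressions.  If `P = Q` holds in all
commutative rings and `P ≥ Q` holds in all commutative tropical (max-plus)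
algebras, then `P ⊨ Q` in every commutative ELT ring. -/
theorem elt_transfer_principle_surpassing {m : ℕ} (P Q : PPE m × PPE m)
    (hRing : ∀ (S : Type) [CommRing S] (v : Fin m → S),
      P.1.evalS v - P.2.evalS v = Q.1.evalS v - Q.2.evalS v)
    (hTrop : ∀ (G : Type) [AddCommGroup G] [LinearOrder G] [IsOrderedAddMonoid G] (v : Fin m → WithBot G),
      max (Q.1.evalTrop v) (Q.2.evalTrop v) ≤ max (P.1.evalTrop v) (P.2.evalTrop v))
    {F L : Type*} [AddCommGroup F] [LinearOrder F] [IsOrderedAddMonoid F] [CommRing L]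
    (v : Fin m → Option (F × L)) :
    eSurp (eAdd (P.1.evalELT v) (eNeg (P.2.evalELT v)))
      (eAdd (Q.1.evalELT v) (eNeg (Q.2.evalELT v))) := by
  have hsum : P.1.evalELT v + Q.2.evalELT v = Q.1.evalELT v + P.2.evalELT v := by
    simp only [PPE.evalELT_eq_evalS]
    exact PPE.evalS_eq_of_forall_commRing (.add P.1 Q.2) (.add Q.1 P.2)
      (fun S _ w => sub_eq_sub_iff_add_eq_add.1 (hRing S w)) v
  have hval : max (tBar (Q.1.evalELT v)) (tBar (Q.2.evalELT v)) ≤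
      max (tBar (P.1.evalELT v)) (tBar (P.2.evalELT v)) := by
    simp only [PPE.tBar_evalELT]
    exact PPE.evalTrop_le_of_forall_type (.add P.1 P.2) (.add Q.1 Q.2) hTrop (tBar ∘ v)
  exact eSurp_add_eNeg_of_add_eq hsum hval
end

section
/- For n×n matrices A, B over a commutative ELT ring R (with entries allowed to be −∞), det(AB) ⊨ det(A)·det(B), where det(M) = Σ_{σ∈S_n} sgn(σ)·m_{1,σ(1)}⋯m_{n,σ(n)} with sgn(σ) interpreted as the layer element (0, ±1). -/
/-- Finite sums in R̄ (the result is independent of the enumeration order since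
`eAdd` is commutative and associative with identity −∞). -/
noncomputable def eSumF {F L α : Type*} [Fintype α] [LinearOrder F] [Add L]
    (f : α → Option (F × L)) : Option (F × L) :=
  ((Finset.univ : Finset α).toList.map f).foldr eAdd none

/-- Finite products in R̄. -/
def eProd {F L : Type*} [Zero F] [Add F] [One L] [Mul L] {k : ℕ}
    (f : Fin k → Option (F × L)) : Option (F × L) :=
  (List.ofFn f).foldr eMul (some ((0 : F), (1 : L)))

/-- The ELT determinant, with sgn(σ) interpreted as the layer element (0, ±1). -/
noncomputable def eltDet {F L : Type*} [AddCommGroup F] [LinearOrder F] [IsOrderedAddMonoid F] [CommRing L] {n : ℕ}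
    (A : Matrix (Fin n) (Fin n) (Option (F × L))) : Option (F × L) :=
  eSumF fun σ : Equiv.Perm (Fin n) =>
    eMul (some ((0 : F), ((Equiv.Perm.sign σ : ℤ) : L))) (eProd fun i => A i (σ i))

/-- Matrix multiplication over R̄. -/
noncomputable def eMatMul {F L : Type*} [AddCommGroup F] [LinearOrder F] [IsOrderedAddMonoid F] [CommRing L] {n : ℕ}
    (A B : Matrix (Fin n) (Fin n) (Option (F × L))) :
    Matrix (Fin n) (Fin n) (Option (F × L)) :=
  fun i j => eSumF fun k => eMul (A i k) (B k j)

/-- The identity matrix over R̄. -/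
def eId {F L : Type*} [AddCommGroup F] [LinearOrder F] [IsOrderedAddMonoid F] [CommRing L] (n : ℕ) :
    Matrix (Fin n) (Fin n) (Option (F × L)) :=
  fun i j => if i = j then some ((0 : F), (1 : L)) else none

/-!
Adjoining −∞ makes R̄ a commutative semiring in which the elements of layer 0 form an ideal,
the ghosts. Expanding det(AB) as in the classical proof gives a sum over all maps
p : [n] → [n] of Σ_σ sgn(σ) ∏ᵢ a_{i,p(i)} b_{p(i),σ(i)}. The bijective p reassemble into
det(A)·det(B). If p(i) = p(j) with i ≠ j, the terms of σ and σ·(i j) carry the same product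
with layers of opposite sign, so each such pair is a ghost; the non-bijective p therefore
contribute a ghost, which is the required surplus.
-/

namespace ELT

open Finset Equiv

section Additive

variable {F L : Type*} [LinearOrder F] [AddCommSemigroup L]

theorem eltAdd_comm (x y : F × L) : eltAdd x y = eltAdd y x := by
  unfold eltAdd
  split_ifs <;> ext <;> simp_all [add_comm, le_antisymm_iff, lt_asymm]

theorem eltAdd_assoc (x y z : F × L) : eltAdd (eltAdd x y) z = eltAdd x (eltAdd y z) := by
  unfold eltAdd
  split_ifs <;> simp_all [add_assoc] <;> order

theorem eAdd_comm (x y : Option (F × L)) : eAdd x y = eAdd y x := by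
  cases x <;> cases y <;> simp [eAdd, eltAdd_comm]

theorem eAdd_assoc (x y z : Option (F × L)) : eAdd (eAdd x y) z = eAdd x (eAdd y z) := by
  cases x <;> cases y <;> cases z <;> simp [eAdd, eltAdd_assoc]

end Additive

section Multiplicative

variable {F L : Type*} [AddCommMonoid F] [CommMonoid L]

theorem eMul_comm (x y : Option (F × L)) : eMul x y = eMul y x := by
  cases x <;> cases y <;> simp [eMul, eltMul, add_comm, mul_comm]

theorem eMul_assoc (x y z : Option (F × L)) : eMul (eMul x y) z = eMul x (eMul y z) := by
  cases x <;> cases y <;> cases z <;> simp [eMul, eltMul, add_assoc, mul_assoc]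

theorem eMul_some_zero_one (x : Option (F × L)) : eMul x (some (0, 1)) = x := by
  cases x <;> simp [eMul, eltMul]

end Multiplicative

section Semiring

variable {F L : Type*} [AddCommMonoid F] [LinearOrder F] [IsOrderedCancelAddMonoid F]
  [CommSemiring L]

theorem eltMul_eltAdd (x y z : F × L) : eltMul x (eltAdd y z) = eltAdd (eltMul x y) (eltMul x z) := by
  simp only [eltAdd, eltMul, add_lt_add_iff_left]
  split_ifs <;> simp [mul_add]

theorem eMul_eAdd (x y z : Option (F × L)) : eMul x (eAdd y z) = eAdd (eMul x y) (eMul x z) := by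
  cases x <;> cases y <;> cases z <;> simp [eMul, eAdd, eltMul_eltAdd]

instance : Zero (Option (F × L)) := ⟨none⟩
instance : One (Option (F × L)) := ⟨some (0, 1)⟩
instance : Add (Option (F × L)) := ⟨eAdd⟩
instance : Mul (Option (F × L)) := ⟨eMul⟩

instance : CommSemiring (Option (F × L)) where
  nsmul := nsmulRec
  zero_add _ := rfl
  add_zero x := by cases x <;> rfl
  add_comm := eAdd_comm
  add_assoc := eAdd_assoc
  zero_mul _ := rfl
  mul_zero x := by cases x <;> rfl
  mul_one := eMul_some_zero_one
  one_mul x := (eMul_comm _ x).trans (eMul_some_zero_one x)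
  mul_comm := eMul_comm
  mul_assoc := eMul_assoc
  left_distrib := eMul_eAdd
  right_distrib x y z := by
    change eMul (eAdd x y) z = eAdd (eMul x z) (eMul y z)
    rw [eMul_comm, eMul_eAdd, eMul_comm z, eMul_comm z]

theorem eSumF_eq_sum {α : Type*} [Fintype α] (f : α → Option (F × L)) : eSumF f = ∑ a, f a := by
  rw [← sum_map_toList, List.sum_eq_foldr]
  rfl

theorem eProd_eq_prod {k : ℕ} (f : Fin k → Option (F × L)) : eProd f = ∏ i, f i := by
  rw [← List.prod_ofFn, List.prod_eq_foldr]
  rfl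

def ghostIdeal : Ideal (Option (F × L)) where
  carrier := {x | sBar x = 0}
  zero_mem' := rfl
  add_mem' {x y} hx hy := by
    rcases x with _ | ⟨a, s⟩ <;> rcases y with _ | ⟨b, t⟩
    any_goals assumption
    change s = 0 at hx
    change t = 0 at hy
    show sBar (some (eltAdd (a, s) (b, t))) = 0
    simp only [sBar, eltAdd]
    split_ifs <;> simp [hx, hy]
  smul_mem' c x hx := by
    rcases c with _ | c <;> rcases x with _ | x
    any_goals rfl
    change x.2 = 0 at hx
    show sBar (some (eltMul c x)) = 0
    simp [sBar, eltMul, hx]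

theorem eSurp_of_eq_add_of_mem_ghostIdeal {x y z : Option (F × L)} (h : x = y + z)
    (hz : z ∈ ghostIdeal) : eSurp x y :=
  ⟨z, hz, h⟩

end Semiring

theorem sum_perm_mem_of_add_mul_swap_mem {α M S : Type*} [DecidableEq α] [Fintype α]
    [AddCommMonoid M] [SetLike S M] [AddSubmonoidClass S M] (s : S) {i j : α} (hij : i ≠ j)
    (f : Perm α → M) (hf : ∀ σ, f σ + f (σ * swap i j) ∈ s) : ∑ σ, f σ ∈ s := by
  -- right multiplication by `swap i j` exchanges the even and the odd permutations
  have hodd : ∑ σ with ¬ Perm.sign σ = 1, f σ = ∑ σ with Perm.sign σ = 1, f (σ * swap i j) := by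
    refine sum_nbij' (· * swap i j) (· * swap i j) ?_ ?_ ?_ ?_ ?_ <;>
      simp [Perm.sign_swap hij, Int.units_ne_iff_eq_neg, neg_eq_iff_eq_neg]
  rw [← sum_filter_add_sum_filter_not univ (Perm.sign · = 1), hodd, ← sum_add_distrib]
  exact sum_mem fun σ _ => hf σ

section Sign

variable {F L : Type*} [AddCommMonoid F] [CommRing L] {n : ℕ}

def permSign (σ : Perm (Fin n)) : Option (F × L) :=
  some (0, ((Perm.sign σ : ℤ) : L))

theorem permSign_mul (σ τ : Perm (Fin n)) :
    (permSign (σ * τ) : Option (F × L)) = permSign σ * permSign τ := by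
  change some _ = some (eltMul _ _)
  simp [eltMul, Perm.sign_mul]

end Sign

section Determinant

variable {F L : Type*} [AddCommGroup F] [LinearOrder F] [IsOrderedAddMonoid F] [CommRing L]
  {n : ℕ}

theorem permSign_add_permSign_mul_swap_mem_ghostIdeal (σ : Perm (Fin n)) {i j : Fin n}
    (hij : i ≠ j) : (permSign σ + permSign (σ * swap i j) : Option (F × L)) ∈ ghostIdeal := by
  show sBar (some (eltAdd _ _)) = 0
  simp [sBar, eltAdd, Perm.sign_mul, Perm.sign_swap hij]

theorem eltDet_eq_sum (M : Matrix (Fin n) (Fin n) (Option (F × L))) :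
    eltDet M = ∑ σ : Perm (Fin n), permSign σ * ∏ i, M i (σ i) := by
  simp only [eltDet, eSumF_eq_sum, eProd_eq_prod]
  rfl

theorem eltDet_eMatMul (A B : Matrix (Fin n) (Fin n) (Option (F × L))) :
    eltDet (eMatMul A B) =
      ∑ p : Fin n → Fin n, ∑ σ : Perm (Fin n), permSign σ * ∏ i, A i (p i) * B (p i) (σ i) := by
  have hmul : eMatMul A B = A * B := by
    funext i j
    exact eSumF_eq_sum fun k => A i k * B k j
  simp only [eltDet_eq_sum, hmul, Matrix.mul_apply, prod_univ_sum, mul_sum,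
    Fintype.piFinset_univ]
  exact sum_comm

theorem sum_permSign_mul_prod_mem_ghostIdeal (A B : Matrix (Fin n) (Fin n) (Option (F × L)))
    {p : Fin n → Fin n} (hp : ¬ p.Injective) :
    ∑ σ : Perm (Fin n), permSign σ * ∏ i, A i (p i) * B (p i) (σ i) ∈ ghostIdeal := by
  obtain ⟨i, j, hpij, hij⟩ : ∃ i j, p i = p j ∧ i ≠ j := by
    simpa [Function.Injective] using hp
  refine sum_perm_mem_of_add_mul_swap_mem ghostIdeal hij _ fun σ => ?_
  have hB : ∏ k, B (p k) ((σ * swap i j) k) = ∏ k, B (p k) (σ k) :=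
    Fintype.prod_equiv (swap i j) _ _ fun k => by simp [apply_swap_eq_self hpij]
  rw [prod_mul_distrib, prod_mul_distrib, hB, ← add_mul]
  exact Ideal.mul_mem_right _ _ (permSign_add_permSign_mul_swap_mem_ghostIdeal σ hij)

theorem sum_permSign_mul_prod_perm (A B : Matrix (Fin n) (Fin n) (Option (F × L)))
    (τ : Perm (Fin n)) :
    ∑ σ : Perm (Fin n), permSign σ * ∏ i, A i (τ i) * B (τ i) (σ i) =
      permSign τ * (∏ i, A i (τ i)) * eltDet B := by
  rw [eltDet_eq_sum, mul_sum]
  refine Fintype.sum_equiv (Equiv.mulRight τ⁻¹) _ _ fun σ => ?_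
  have hB : ∏ i, B i ((σ * τ⁻¹) i) = ∏ i, B (τ i) (σ i) := by
    rw [← Equiv.prod_comp τ]
    simp
  have hsign : permSign (σ * τ⁻¹) * permSign τ = (permSign σ : Option (F × L)) := by
    rw [← permSign_mul, inv_mul_cancel_right]
  rw [coe_mulRight, hB, prod_mul_distrib, ← hsign]
  ring

theorem sum_bijective_eq_eltDet_mul (A B : Matrix (Fin n) (Fin n) (Option (F × L))) :
    ∑ p : Fin n → Fin n with p.Bijective,
        ∑ σ : Perm (Fin n), permSign σ * ∏ i, A i (p i) * B (p i) (σ i) =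
      eltDet A * eltDet B := by
  rw [eltDet_eq_sum A, sum_mul]
  exact sum_bij (fun p hp ↦ ofBijective p (mem_filter.1 hp).2) (fun _ _ ↦ mem_univ _)
    (fun _ _ _ _ h ↦ by injection h)
    (fun τ _ ↦ ⟨τ, mem_filter.2 ⟨mem_univ _, τ.bijective⟩, coe_fn_injective rfl⟩)
    fun p hp ↦ sum_permSign_mul_prod_perm A B (ofBijective p (mem_filter.1 hp).2)

end Determinant

end ELT

open ELT Finset in
/-- Multiplicativity of the ELT determinant up to surpassing: det(AB) ⊨ det(A)det(B). -/
theorem eltDet_mul_surpass {F L : Type*} [AddCommGroup F] [LinearOrder F] [IsOrderedAddMonoid F] [CommRing L]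
    {n : ℕ} (A B : Matrix (Fin n) (Fin n) (Option (F × L))) :
    eSurp (eltDet (eMatMul A B)) (eMul (eltDet A) (eltDet B)) := by
  classical
  refine eSurp_of_eq_add_of_mem_ghostIdeal (z := ∑ p : Fin n → Fin n with ¬ p.Bijective,
    ∑ σ : Equiv.Perm (Fin n), permSign σ * ∏ i, A i (p i) * B (p i) (σ i)) ?_ ?_
  · rw [eltDet_eMatMul, ← sum_filter_add_sum_filter_not univ Function.Bijective,
      sum_bijective_eq_eltDet_mul]
    rfl
  · exact Ideal.sum_mem _ fun p hp => sum_permSign_mul_prod_mem_ghostIdeal A B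
      fun hinj => (mem_filter.1 hp).2 (Finite.injective_iff_bijective.1 hinj)
end
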